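/- arXiv:2412.18968 — 4 statements merged into one kernel-verified Lean document; each statement's English description precedes it below -/
import Mathlib

section
/- Under the same setup, the solution w satisfies the implicit formula ∫_{v₀}^{w(x)} ds / B⁻¹(F(s) − F(v₀)) = x − x_m for all x in the maximal interval of existence to the right of x_m. -/
open Filter Set intervalIntegral Topology MeasureTheory

/-- The solution of the IVP `(A(w'))' = f(w)`, `w(x_m)=v₀>0`, `w'(x_m)=0` satisfies
the implicit formula `∫_{v₀}^{w(x)} ds / B⁻¹(F(s) − F(v₀)) = x − x_m` on the right of `x_m`. -/
theorem stmt2 (A f w F B Binv : ℝ → ℝ) (x_m b v₀ : ℝ)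
    (hA : ContDiff ℝ 1 A) (hAmono : Monotone A) (hA0 : A 0 = 0)
    (hA'pos : ∀ r > 0, 0 < deriv A r)
    (hf_cont : ContinuousOn f (Set.Ici 0)) (hf_mono : MonotoneOn f (Set.Ici 0))
    (hf_nonneg : ∀ r ≥ (0:ℝ), 0 ≤ f r) (hf_pos : ∀ r > (0:ℝ), 0 < f r)
    (hF : ∀ x, F x = ∫ t in (0:ℝ)..x, f t)
    (hB : ∀ x, B x = ∫ s in (0:ℝ)..x, deriv A s * s)
    (hBinv_left : ∀ x ≥ (0:ℝ), Binv (B x) = x)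
    (hBinv_right : ∀ t ≥ (0:ℝ), B (Binv t) = t)
    (hb : x_m < b) (hv₀ : 0 < v₀)
    (hw : ContDiffOn ℝ 2 w (Set.Ico x_m b))
    (hode : ∀ x ∈ Set.Ico x_m b, HasDerivAt (fun y => A (deriv w y)) (f (w x)) x)
    (hw0 : w x_m = v₀) (hw'0 : deriv w x_m = 0)
    (hw'pos : ∀ x ∈ Set.Ioo x_m b, 0 < deriv w x) :
    ∀ x ∈ Set.Ioo x_m b,
      (∫ s in v₀..(w x), 1 / Binv (F s - F v₀)) = x - x_m := by
  have hwc : ContinuousOn w (Set.Ico x_m b) := hw.continuousOn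
  -- strict monotonicity of w on closed subintervals
  have hmono : ∀ t, t < b → StrictMonoOn w (Set.Icc x_m t) := by
    intro t ht
    apply strictMonoOn_of_deriv_pos (convex_Icc _ _) (hwc.mono (Icc_subset_Ico_right ht))
    intro y hy
    rw [interior_Icc] at hy
    exact hw'pos y ⟨hy.1, hy.2.trans ht⟩
  have hwgt : ∀ y ∈ Set.Ioo x_m b, v₀ < w y := by
    intro y hy
    have := hmono y hy.2 ⟨le_rfl, hy.1.le⟩ ⟨hy.1.le, le_rfl⟩ hy.1
    rwa [hw0] at this
  -- derivative of F at positive points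
  have hFd : ∀ t : ℝ, 0 < t → HasDerivAt F (f t) t := by
    intro t ht
    have h1 : IntervalIntegrable f MeasureTheory.volume 0 t := by
      apply ContinuousOn.intervalIntegrable
      apply hf_cont.mono
      rw [Set.uIcc_of_le ht.le]
      exact fun s hs => hs.1
    have h2 : ContinuousAt f t := hf_cont.continuousAt (Ici_mem_nhds ht)
    have h3 : StronglyMeasurableAtFilter f (𝓝 t) MeasureTheory.volume := by
      refine ContinuousOn.stronglyMeasurableAtFilter isOpen_Ioi
        (hf_cont.mono Ioi_subset_Ici_self) t ht
    have h4 := intervalIntegral.integral_hasDerivAt_right h1 h3 h2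
    have hFe : F = fun u => ∫ s in (0:ℝ)..u, f s := funext hF
    rw [hFe]
    exact h4
  -- derivative of B everywhere
  have hA'c : Continuous (deriv A) := hA.continuous_deriv le_rfl
  have hgc : Continuous (fun s : ℝ => deriv A s * s) := hA'c.mul continuous_id
  have hBd : ∀ t : ℝ, HasDerivAt B (deriv A t * t) t := by
    intro t
    have h4 := intervalIntegral.integral_hasDerivAt_right
      (hgc.intervalIntegrable 0 t)
      (hgc.stronglyMeasurableAtFilter MeasureTheory.volume (𝓝 t)) hgc.continuousAt
    have hBe : B = fun u => ∫ s in (0:ℝ)..u, deriv A s * s := funext hB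
    rw [hBe]
    exact h4
  have hB0 : B 0 = 0 := by rw [hB]; simp
  have hAcont : Continuous A := hA.continuous
  have hAsm : StrictMonoOn A (Set.Ici 0) := by
    apply strictMonoOn_of_deriv_pos (convex_Ici 0) hAcont.continuousOn
    intro r hr
    rw [interior_Ici] at hr
    exact hA'pos r hr
  -- differentiability of w and deriv w at interior points
  have hwd : ∀ y ∈ Set.Ioo x_m b, HasDerivAt w (deriv w y) y := by
    intro y hy
    have h1 : Set.Ico x_m b ∈ 𝓝 y := Ico_mem_nhds hy.1 hy.2
    exact ((hw.differentiableOn (by norm_num)).differentiableAt h1).hasDerivAt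
  have hw'd : ∀ y ∈ Set.Ioo x_m b, HasDerivAt (deriv w) (deriv (deriv w) y) y := by
    intro y hy
    have h1 : Set.Ico x_m b ∈ 𝓝 y := Ico_mem_nhds hy.1 hy.2
    have h2 : ContDiffAt ℝ 2 w y := hw.contDiffAt h1
    obtain ⟨u, hu, hcd⟩ := h2.contDiffOn le_rfl (by simp)
    obtain ⟨v, hvu, hv, hyv⟩ := mem_nhds_iff.mp hu
    have h3 : ContDiffOn ℝ 1 (deriv w) v :=
      (hcd.mono hvu).deriv_of_isOpen hv (by norm_num)
    exact ((h3.differentiableOn one_ne_zero).differentiableAt (hv.mem_nhds hyv)).hasDerivAt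
  -- the ODE in explicit form
  have hode' : ∀ y ∈ Set.Ioo x_m b, deriv A (deriv w y) * deriv (deriv w) y = f (w y) := by
    intro y hy
    have h1 : HasDerivAt A (deriv A (deriv w y)) (deriv w y) :=
      ((hA.differentiable one_ne_zero) (deriv w y)).hasDerivAt
    have h2 := h1.comp y (hw'd y hy)
    exact h2.unique (hode y ⟨hy.1.le, hy.2⟩)
  -- energy function has zero derivative
  have hE : ∀ y ∈ Set.Ioo x_m b,
      HasDerivAt (fun z => B (deriv w z) - F (w z)) 0 y := by
    intro y hy
    have hwy : 0 < w y := hv₀.trans (hwgt y hy)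
    have h1 : HasDerivAt (fun z => B (deriv w z))
        (deriv A (deriv w y) * deriv w y * deriv (deriv w) y) y :=
      (hBd (deriv w y)).comp y (hw'd y hy)
    have h2 : HasDerivAt (fun z => F (w z)) (f (w y) * deriv w y) y :=
      (hFd (w y) hwy).comp y (hwd y hy)
    have h3 := h1.sub h2
    have h4 : deriv A (deriv w y) * deriv w y * deriv (deriv w) y - f (w y) * deriv w y = 0 := by
      linear_combination (deriv w y) * hode' y hy
    rw [h4] at h3
    exact h3
  -- energy is constant on Ioo
  have hconst : ∀ y ∈ Set.Ioo x_m b, ∀ z ∈ Set.Ioo x_m b,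
      B (deriv w y) - F (w y) = B (deriv w z) - F (w z) := by
    have key : ∀ y ∈ Set.Ioo x_m b, ∀ z ∈ Set.Ioo x_m b, y ≤ z →
        B (deriv w y) - F (w y) = B (deriv w z) - F (w z) := by
      intro y hy z hz hyz
      have h1 : ∀ t ∈ Set.uIcc y z, HasDerivAt (fun u => B (deriv w u) - F (w u)) 0 t := by
        intro t ht
        rw [Set.uIcc_of_le hyz] at ht
        exact hE t ⟨hy.1.trans_le ht.1, lt_of_le_of_lt ht.2 hz.2⟩
      have h2 := intervalIntegral.integral_eq_sub_of_hasDerivAt h1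
        (_root_.intervalIntegrable_const (c := (0:ℝ)))
      simp at h2
      linarith [h2]
    intro y hy z hz
    rcases le_total y z with h | h
    · exact key y hy z hz h
    · exact (key z hz y hy h).symm
  -- limit of deriv w at x_m from the right
  set dW := derivWithin w (Set.Ico x_m b) with hdW
  have hdWc : ContinuousOn dW (Set.Ico x_m b) :=
    hw.continuousOn_derivWithin (uniqueDiffOn_Ico x_m b) (by norm_num)
  have heqD : ∀ y ∈ Set.Ioo x_m b, dW y = deriv w y := fun y hy =>
    derivWithin_of_mem_nhds (Ico_mem_nhds hy.1 hy.2)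
  have hIoo_mem : Set.Ioo x_m b ∈ 𝓝[>] x_m := Ioo_mem_nhdsGT_of_mem ⟨le_rfl, hb⟩
  have hfilt : 𝓝[Set.Ioo x_m b] x_m = 𝓝[>] x_m := nhdsWithin_Ioo_eq_nhdsGT hb
  have htdW : Tendsto dW (𝓝[>] x_m) (𝓝 (dW x_m)) := by
    have h1 : Tendsto dW (𝓝[Set.Ico x_m b] x_m) (𝓝 (dW x_m)) := hdWc x_m ⟨le_rfl, hb⟩
    refine h1.mono_left ?_
    rw [← hfilt]
    exact nhdsWithin_mono _ Set.Ioo_subset_Ico_self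
  have htd : Tendsto (deriv w) (𝓝[>] x_m) (𝓝 (dW x_m)) := by
    apply htdW.congr'
    filter_upwards [hIoo_mem] with y hy
    exact heqD y hy
  have hL0 : dW x_m = 0 := by
    have hLnn : 0 ≤ dW x_m := by
      refine ge_of_tendsto htd ?_
      filter_upwards [hIoo_mem] with y hy
      exact (hw'pos y hy).le
    have hAL : A (dW x_m) = 0 := by
      have h1 : Tendsto (fun y => A (deriv w y)) (𝓝[>] x_m) (𝓝 (A (dW x_m))) :=
        (hAcont.tendsto _).comp htd
      have h2 : ContinuousAt (fun y => A (deriv w y)) x_m :=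
        (hode x_m ⟨le_rfl, hb⟩).continuousAt
      have h3 : Tendsto (fun y => A (deriv w y)) (𝓝[>] x_m) (𝓝 (A (deriv w x_m))) :=
        h2.continuousWithinAt.tendsto
      have h4 := tendsto_nhds_unique h1 h3
      rw [hw'0, hA0] at h4
      exact h4
    rcases hLnn.eq_or_lt with h | h
    · exact h.symm
    · exfalso
      have := hAsm (Set.self_mem_Ici) (Set.mem_Ici.mpr hLnn) h
      rw [hA0, hAL] at this
      exact lt_irrefl 0 this
  -- energy constant equals -F v₀
  have hwt : Tendsto w (𝓝[>] x_m) (𝓝 v₀) := by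
    have h1 : Tendsto w (𝓝[Set.Ico x_m b] x_m) (𝓝 (w x_m)) := hwc x_m ⟨le_rfl, hb⟩
    rw [hw0] at h1
    refine h1.mono_left ?_
    rw [← hfilt]
    exact nhdsWithin_mono _ Set.Ioo_subset_Ico_self
  have hEtend : Tendsto (fun y => B (deriv w y) - F (w y)) (𝓝[>] x_m) (𝓝 (0 - F v₀)) := by
    have h1 : Tendsto (fun y => B (deriv w y)) (𝓝[>] x_m) (𝓝 0) := by
      have := ((hBd 0).continuousAt.tendsto).comp (hL0 ▸ htd)
      rwa [hB0] at this
    have h2 : Tendsto (fun y => F (w y)) (𝓝[>] x_m) (𝓝 (F v₀)) :=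
      ((hFd v₀ hv₀).continuousAt.tendsto).comp hwt
    exact h1.sub h2
  have henergy : ∀ y ∈ Set.Ioo x_m b, B (deriv w y) = F (w y) - F v₀ := by
    intro y hy
    have h1 : Tendsto (fun z => B (deriv w z) - F (w z)) (𝓝[>] x_m)
        (𝓝 (B (deriv w y) - F (w y))) := by
      apply Tendsto.congr' _ tendsto_const_nhds
      filter_upwards [hIoo_mem] with z hz
      exact hconst y hy z hz
    have h2 := tendsto_nhds_unique h1 hEtend
    linarith [h2]
  have hBinvw : ∀ y ∈ Set.Ioo x_m b, Binv (F (w y) - F v₀) = deriv w y := by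
    intro y hy
    rw [← henergy y hy, hBinv_left _ (hw'pos y hy).le]
  -- main part
  intro x hx
  set d := w x with hd
  have hcd : v₀ < d := hwgt x hx
  have hSsub : Set.Icc x_m x ⊆ Set.Ico x_m b := Icc_subset_Ico_right hx.2
  have hmx : StrictMonoOn w (Set.Icc x_m x) := hmono x hx.2
  have hmap : Set.MapsTo w (Set.Icc x_m x) (Set.Icc v₀ d) := by
    intro y hy
    constructor
    · have := hmx.monotoneOn ⟨le_rfl, hx.1.le⟩ hy hy.1
      rwa [hw0] at this
    · exact hmx.monotoneOn hy ⟨hx.1.le, le_rfl⟩ hy.2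
  have hinj : Set.InjOn w (Set.Icc x_m x) := hmx.injOn
  have hsurj : Set.SurjOn w (Set.Icc x_m x) (Set.Icc v₀ d) := by
    have := intermediate_value_Icc hx.1.le (hwc.mono hSsub)
    rw [hw0] at this
    exact this
  -- inverse function via compactness
  haveI : CompactSpace (Set.Icc x_m x) := isCompact_iff_compactSpace.mp isCompact_Icc
  let em : Set.Icc x_m x → Set.Icc v₀ d := fun p => ⟨w p, hmap p.2⟩
  have hcont_em : Continuous em :=
    Continuous.subtype_mk ((hwc.mono hSsub).restrict) _
  have hbij_em : Function.Bijective em := by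
    constructor
    · intro p q hpq
      exact Subtype.ext (hinj p.2 q.2 (congrArg Subtype.val hpq))
    · intro q
      obtain ⟨y, hy, hwy⟩ := hsurj q.2
      exact ⟨⟨y, hy⟩, Subtype.ext hwy⟩
  let e : Set.Icc x_m x ≃ Set.Icc v₀ d := Equiv.ofBijective em hbij_em
  have hce : Continuous (e : Set.Icc x_m x → Set.Icc v₀ d) := hcont_em
  let hom := hce.homeoOfEquivCompactToT2
  classical
  set ψ : ℝ → ℝ := fun s => if hs : s ∈ Set.Icc v₀ d then (hom.symm ⟨s, hs⟩ : ℝ) else x_m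
    with hψdef
  have hψ_basic : ∀ s (hs : s ∈ Set.Icc v₀ d), w (ψ s) = s ∧ ψ s ∈ Set.Icc x_m x := by
    intro s hs
    have h1 : hom (hom.symm ⟨s, hs⟩) = ⟨s, hs⟩ := hom.apply_symm_apply _
    have h2 : w ((hom.symm ⟨s, hs⟩ : Set.Icc x_m x) : ℝ) = s := by
      have := congrArg Subtype.val h1
      exact this
    constructor
    · rw [hψdef]; simp only [dif_pos hs]; exact h2
    · rw [hψdef]; simp only [dif_pos hs]; exact (hom.symm ⟨s, hs⟩).2
  have hψcont : ContinuousOn ψ (Set.Icc v₀ d) := by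
    rw [continuousOn_iff_continuous_restrict]
    have h1 : Set.domRestrict (Set.Icc v₀ d) ψ = fun p => (hom.symm p : ℝ) := by
      funext p
      rw [hψdef]
      simp only [Set.domRestrict_apply, dif_pos p.2]
    rw [h1]
    exact continuous_subtype_val.comp hom.symm.continuous
  have hψw : ∀ y ∈ Set.Icc x_m x, ψ (w y) = y := by
    intro y hy
    have h1 : w y ∈ Set.Icc v₀ d := hmap hy
    exact hinj (hψ_basic _ h1).2 hy (hψ_basic _ h1).1
  have hψmem : ∀ s ∈ Set.Ioo v₀ d, ψ s ∈ Set.Ioo x_m x := by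
    intro s hs
    obtain ⟨hws, hmem⟩ := hψ_basic s ⟨hs.1.le, hs.2.le⟩
    constructor
    · by_contra h
      push_neg at h
      have h2 : ψ s = x_m := le_antisymm h hmem.1
      rw [h2, hw0] at hws
      exact hs.1.ne hws
    · by_contra h
      push_neg at h
      have h2 : ψ s = x := le_antisymm hmem.2 h
      rw [h2] at hws
      exact hs.2.ne' hws
  -- derivative of ψ
  have hψd : ∀ s ∈ Set.Ioo v₀ d, HasDerivAt ψ ((deriv w (ψ s))⁻¹) s := by
    intro s hs
    have hy := hψmem s hs
    have hyb : ψ s ∈ Set.Ioo x_m b := ⟨hy.1, hy.2.trans hx.2⟩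
    have hwd' : HasDerivAt w (deriv w (ψ s)) (ψ s) := hwd _ hyb
    have hne : deriv w (ψ s) ≠ 0 := (hw'pos _ hyb).ne'
    have hcψ : ContinuousAt ψ s := hψcont.continuousAt (Icc_mem_nhds hs.1 hs.2)
    have hev : ∀ᶠ t in 𝓝 s, w (ψ t) = t := by
      filter_upwards [Icc_mem_nhds hs.1 hs.2] with t ht
      exact (hψ_basic t ht).1
    exact HasDerivAt.of_local_left_inverse hcψ hwd' hne hev
  -- identification of the integrand
  have hg_eq : ∀ s ∈ Set.Ioo v₀ d, 1 / Binv (F s - F v₀) = (deriv w (ψ s))⁻¹ := by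
    intro s hs
    have hy := hψmem s hs
    have hyb : ψ s ∈ Set.Ioo x_m b := ⟨hy.1, hy.2.trans hx.2⟩
    have hws : w (ψ s) = s := (hψ_basic s ⟨hs.1.le, hs.2.le⟩).1
    have h1 : F s - F v₀ = B (deriv w (ψ s)) := by
      rw [henergy _ hyb, hws]
    rw [h1, hBinv_left _ (hw'pos _ hyb).le, one_div]
  -- integrability
  have hint : IntervalIntegrable (fun s => 1 / Binv (F s - F v₀))
      MeasureTheory.volume v₀ d := by
    apply intervalIntegral.intervalIntegrable_deriv_of_nonneg (g := ψ)
    · rw [Set.uIcc_of_le hcd.le]; exact hψcont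
    · intro s hs
      rw [min_eq_left hcd.le, max_eq_right hcd.le] at hs
      rw [hg_eq s hs]
      exact hψd s hs
    · intro s hs
      rw [min_eq_left hcd.le, max_eq_right hcd.le] at hs
      rw [hg_eq s hs]
      have hy := hψmem s hs
      exact (inv_nonneg).mpr (hw'pos _ ⟨hy.1, hy.2.trans hx.2⟩).le
  -- FTC
  have key := intervalIntegral.integral_eq_sub_of_hasDeriv_right_of_le hcd.le hψcont
    (fun s hs => by
      rw [hg_eq s hs]
      exact (hψd s hs).hasDerivWithinAt) hint
  rw [key]
  have hψd' : ψ d = x := hψw x ⟨hx.1.le, le_rfl⟩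
  have hψc' : ψ v₀ = x_m := by
    have := hψw x_m ⟨le_rfl, hx.1.le⟩
    rwa [hw0] at this
  rw [hψd', hψc']
end

section
/- If w₁ and w₂ are two solutions of the IVP (A(w'))' = f(w), w(x_m)=v₀>0, w'(x_m)=0, on a common interval (x_m, b), both strictly increasing, then w₁ = w₂ on (x_m, b). -/
open Filter Set intervalIntegral Topology

/-- Energy identity for a single solution: `B (w' x) = F (w x)` and `w' x > 0` on `Ioo x_m b`,
where `B s = ∫_0^s t A'(t) dt` and `F v = ∫_{v₀}^v g` with `g t = f (max t (v₀/2))`. -/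
theorem stmt4_energy (A f w : ℝ → ℝ) (x_m b v₀ : ℝ)
    (hA : ContDiff ℝ 1 A) (hA0 : A 0 = 0)
    (hA'pos : ∀ r > 0, 0 < deriv A r)
    (hf_cont : ContinuousOn f (Set.Ici 0))
    (hf_pos : ∀ r > (0:ℝ), 0 < f r)
    (hb : x_m < b) (hv₀ : 0 < v₀)
    (hw : ContDiffOn ℝ 2 w (Set.Ico x_m b))
    (hode : ∀ x ∈ Set.Ico x_m b, HasDerivAt (fun y => A (deriv w y)) (f (w x)) x)
    (hw0 : w x_m = v₀) (hw'0 : deriv w x_m = 0)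
    (hwinc : StrictMonoOn w (Set.Ico x_m b)) :
    ∀ x ∈ Set.Ioo x_m b,
      (∫ t in (0:ℝ)..(deriv w x), t * deriv A t) = (∫ t in v₀..(w x), f (max t (v₀/2)))
      ∧ 0 < deriv w x := by
  have hA' : Continuous (deriv A) := hA.continuous_deriv le_rfl
  set g : ℝ → ℝ := fun t => f (max t (v₀/2)) with hg_def
  have hgc : Continuous g := by
    apply hf_cont.comp_continuous (continuous_id.max continuous_const)
    intro v
    exact le_trans (le_of_lt (half_pos hv₀)) (le_max_right _ _)
  have hgpos : ∀ t, 0 < g t := fun t =>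
    hf_pos _ (lt_of_lt_of_le (half_pos hv₀) (le_max_right _ _))
  have hgeq : ∀ v, v₀ ≤ v → g v = f v := by
    intro v hv
    simp only [hg_def]
    rw [max_eq_left (le_trans (le_of_lt (half_lt_self hv₀)) hv)]
  set B : ℝ → ℝ := fun s => ∫ t in (0:ℝ)..s, t * deriv A t with hB_def
  set F : ℝ → ℝ := fun v => ∫ t in v₀..v, g t with hF_def
  have hB : ∀ s, HasDerivAt B (s * deriv A s) s := fun s =>
    ((continuous_id.mul hA').integral_hasStrictDerivAt 0 s).hasDerivAt
  have hF : ∀ v, HasDerivAt F (g v) v := fun v =>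
    (hgc.integral_hasStrictDerivAt v₀ v).hasDerivAt
  have hB0 : B 0 = 0 := intervalIntegral.integral_same
  have hF0 : F v₀ = 0 := intervalIntegral.integral_same
  have hIoo : Set.Ioo x_m b ⊆ Set.Ico x_m b := Set.Ioo_subset_Ico_self
  have hwgt : ∀ y ∈ Set.Ioo x_m b, v₀ < w y := by
    intro y hy
    have := hwinc ⟨le_rfl, hb⟩ (hIoo hy) hy.1
    rwa [hw0] at this
  -- differentiability facts on the open interval
  have hwIoo : ContDiffOn ℝ 2 w (Set.Ioo x_m b) := hw.mono hIoo
  have hdw : ContDiffOn ℝ 1 (deriv w) (Set.Ioo x_m b) :=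
    hwIoo.deriv_of_isOpen isOpen_Ioo (by norm_num)
  have hw1 : ∀ y ∈ Set.Ioo x_m b, HasDerivAt w (deriv w y) y := by
    intro y hy
    exact ((hwIoo.differentiableOn (by norm_num)).differentiableAt
      (isOpen_Ioo.mem_nhds hy)).hasDerivAt
  have hw2 : ∀ y ∈ Set.Ioo x_m b, HasDerivAt (deriv w) (deriv (deriv w) y) y := by
    intro y hy
    exact ((hdw.differentiableOn (by norm_num)).differentiableAt
      (isOpen_Ioo.mem_nhds hy)).hasDerivAt
  -- the chain rule identity A'(w') w'' = f(w)
  have hchain : ∀ y ∈ Set.Ioo x_m b,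
      deriv A (deriv w y) * deriv (deriv w) y = g (w y) := by
    intro y hy
    have h1 : HasDerivAt (fun z => A (deriv w z))
        (deriv A (deriv w y) * deriv (deriv w) y) y :=
      ((hA.differentiable (by norm_num) (deriv w y)).hasDerivAt).comp y (hw2 y hy)
    have h2 := hode y (hIoo hy)
    have := h1.unique h2
    rw [this, hgeq _ (le_of_lt (hwgt y hy))]
  -- the energy is constant with derivative 0
  set E : ℝ → ℝ := fun y => B (deriv w y) - F (w y) with hE_def
  have hE0 : ∀ y ∈ Set.Ioo x_m b, HasDerivAt E 0 y := by
    intro y hy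
    have h1 : HasDerivAt (fun z => B (deriv w z))
        ((deriv w y * deriv A (deriv w y)) * deriv (deriv w) y) y :=
      (hB (deriv w y)).comp y (hw2 y hy)
    have h2 : HasDerivAt (fun z => F (w z)) (g (w y) * deriv w y) y :=
      (hF (w y)).comp y (hw1 y hy)
    have h3 := h1.sub h2
    have : deriv w y * deriv A (deriv w y) * deriv (deriv w) y - g (w y) * deriv w y = 0 := by
      rw [mul_assoc, hchain y hy]; ring
    rwa [this] at h3
  have hEconst : ∀ y ∈ Set.Ioo x_m b, ∀ z ∈ Set.Ioo x_m b, y ≤ z → E y = E z := by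
    intro y hy z hz hyz
    have hsub : Set.Icc y z ⊆ Set.Ioo x_m b := Set.Icc_subset _ hy hz
    have := constant_of_has_deriv_right_zero (f := E) (a := y) (b := z)
      (fun u hu => ((hE0 u (hsub hu)).continuousAt).continuousWithinAt)
      (fun u hu => ((hE0 u (hsub (Set.Ico_subset_Icc_self hu))).hasDerivWithinAt))
    exact (this z ⟨hyz, le_rfl⟩).symm
  -- derivative is nonnegative on the open interval
  have hdnn : ∀ y ∈ Set.Ioo x_m b, 0 ≤ deriv w y := by
    intro y hy
    have hs := hasDerivAt_iff_tendsto_slope.mp (hw1 y hy)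
    have hs' : Tendsto (slope w y) (𝓝[>] y) (𝓝 (deriv w y)) :=
      hs.mono_left (nhdsWithin_mono _ (fun z hz => ne_of_gt hz))
    have hev : ∀ᶠ z in 𝓝[>] y, 0 ≤ slope w y z := by
      filter_upwards [Ioo_mem_nhdsGT_of_mem ⟨le_rfl, hy.2⟩] with z hz
      have hzm : z ∈ Set.Ioo x_m b := ⟨lt_trans hy.1 hz.1, hz.2⟩
      have hlt : w y < w z := hwinc (hIoo hy) (hIoo hzm) hz.1
      rw [slope_def_field]
      apply div_nonneg (by linarith) (by linarith [hz.1])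
    exact ge_of_tendsto hs' hev
  -- limits at x_m
  have hwlim : Tendsto w (𝓝[Set.Ioo x_m b] x_m) (𝓝 v₀) := by
    have h := hw.continuousOn x_m ⟨le_rfl, hb⟩
    rw [ContinuousWithinAt, hw0] at h
    exact h.mono_left (nhdsWithin_mono _ hIoo)
  have hne : (𝓝[Set.Ioo x_m b] x_m).NeBot := by
    rw [nhdsWithin_Ioo_eq_nhdsGT hb]; infer_instance
  set c₀ : ℝ := derivWithin w (Set.Ico x_m b) x_m with hc₀_def
  have hc0 : Tendsto (deriv w) (𝓝[Set.Ioo x_m b] x_m) (𝓝 c₀) := by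
    have hcd : ContinuousOn (derivWithin w (Set.Ico x_m b)) (Set.Ico x_m b) :=
      hw.continuousOn_derivWithin (uniqueDiffOn_Ico x_m b) (by norm_num)
    refine Filter.Tendsto.congr' ?_ ((hcd x_m ⟨le_rfl, hb⟩).mono_left (nhdsWithin_mono _ hIoo))
    filter_upwards [self_mem_nhdsWithin] with z hz
    exact derivWithin_of_mem_nhds (mem_nhds_iff.mpr ⟨Set.Ioo x_m b, hIoo, isOpen_Ioo, hz⟩)
  have hc₀nn : 0 ≤ c₀ := by
    refine ge_of_tendsto hc0 ?_
    filter_upwards [self_mem_nhdsWithin] with z hz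
    exact hdnn z hz
  have hAc₀ : A c₀ = 0 := by
    have h1 : Tendsto (fun y => A (deriv w y)) (𝓝[Set.Ioo x_m b] x_m) (𝓝 (A c₀)) :=
      (hA.continuous.tendsto c₀).comp hc0
    have h2 : Tendsto (fun y => A (deriv w y)) (𝓝[Set.Ioo x_m b] x_m) (𝓝 0) := by
      have h := (hode x_m ⟨le_rfl, hb⟩).continuousAt.tendsto
      rw [hw'0, hA0] at h
      exact h.mono_left nhdsWithin_le_nhds
    exact tendsto_nhds_unique h1 h2
  have hc₀0 : c₀ = 0 := by
    by_contra h
    have hpos : 0 < c₀ := lt_of_le_of_ne hc₀nn (Ne.symm h)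
    have hAmono' : StrictMonoOn A (Set.Ici 0) :=
      strictMonoOn_of_deriv_pos (convex_Ici 0) hA.continuous.continuousOn
        (by intro x hx; rw [interior_Ici] at hx; exact hA'pos x hx)
    have := hAmono' (Set.self_mem_Ici) (Set.mem_Ici.mpr hc₀nn) hpos
    rw [hA0, hAc₀] at this
    exact lt_irrefl 0 this
  have hElim : Tendsto E (𝓝[Set.Ioo x_m b] x_m) (𝓝 0) := by
    have h1 : Tendsto (fun y => B (deriv w y)) (𝓝[Set.Ioo x_m b] x_m) (𝓝 (B 0)) :=
      ((hB 0).continuousAt.tendsto).comp (hc₀0 ▸ hc0)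
    have h2 : Tendsto (fun y => F (w y)) (𝓝[Set.Ioo x_m b] x_m) (𝓝 (F v₀)) :=
      ((hF v₀).continuousAt.tendsto).comp hwlim
    have h3 := h1.sub h2
    rw [hB0, hF0, sub_zero] at h3
    exact h3
  have hEzero : ∀ y ∈ Set.Ioo x_m b, E y = 0 := by
    intro y hy
    have h1 : Tendsto E (𝓝[Set.Ioo x_m b] x_m) (𝓝 (E y)) := by
      refine Filter.Tendsto.congr' ?_ (tendsto_const_nhds (α := ℝ) (f := 𝓝[Set.Ioo x_m b] x_m))
      filter_upwards [self_mem_nhdsWithin,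
        mem_nhdsWithin_of_mem_nhds (Iio_mem_nhds hy.1)] with z hz hzy
      exact (hEconst z hz y hy (le_of_lt hzy)).symm
    exact tendsto_nhds_unique h1 hElim
  intro x hx
  have hkey : B (deriv w x) = F (w x) := sub_eq_zero.mp (hEzero x hx)
  have hFpos : 0 < F (w x) :=
    intervalIntegral.intervalIntegral_pos_of_pos_on (hgc.intervalIntegrable v₀ (w x))
      (fun t _ => hgpos t) (hwgt x hx)
  refine ⟨hkey, ?_⟩
  rcases (hdnn x hx).lt_or_eq with h | h
  · exact h
  · exfalso
    rw [← hkey, ← h, hB0] at hFpos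
    exact lt_irrefl 0 hFpos

theorem stmt4_Bmono (A : ℝ → ℝ) (hA : ContDiff ℝ 1 A) (hA'pos : ∀ r > 0, 0 < deriv A r) :
    StrictMonoOn (fun s => ∫ t in (0:ℝ)..s, t * deriv A t) (Set.Ici 0) := by
  have hA' : Continuous (deriv A) := hA.continuous_deriv le_rfl
  have hB : ∀ s : ℝ, HasDerivAt (fun s => ∫ t in (0:ℝ)..s, t * deriv A t)
      (s * deriv A s) s := fun s =>
    ((continuous_id.mul hA').integral_hasStrictDerivAt 0 s).hasDerivAt
  apply strictMonoOn_of_deriv_pos (convex_Ici 0)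
  · exact fun s _ => ((hB s).continuousAt).continuousWithinAt
  · intro s hs
    rw [interior_Ici] at hs
    rw [(hB s).deriv]
    exact mul_pos hs (hA'pos s hs)

theorem stmt4_key (A f w₁ w₂ : ℝ → ℝ) (x_m b v₀ : ℝ)
    (hA : ContDiff ℝ 1 A) (hAmono : Monotone A) (hA0 : A 0 = 0)
    (hA'pos : ∀ r > 0, 0 < deriv A r)
    (hf_cont : ContinuousOn f (Set.Ici 0)) (hf_mono : MonotoneOn f (Set.Ici 0))
    (hf_nonneg : ∀ r ≥ (0:ℝ), 0 ≤ f r) (hf_pos : ∀ r > (0:ℝ), 0 < f r)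
    (hb : x_m < b) (hv₀ : 0 < v₀)
    (hw₁ : ContDiffOn ℝ 2 w₁ (Set.Ico x_m b))
    (hode₁ : ∀ x ∈ Set.Ico x_m b, HasDerivAt (fun y => A (deriv w₁ y)) (f (w₁ x)) x)
    (hw₁0 : w₁ x_m = v₀) (hw₁'0 : deriv w₁ x_m = 0)
    (hw₁inc : StrictMonoOn w₁ (Set.Ico x_m b))
    (hw₂ : ContDiffOn ℝ 2 w₂ (Set.Ico x_m b))
    (hode₂ : ∀ x ∈ Set.Ico x_m b, HasDerivAt (fun y => A (deriv w₂ y)) (f (w₂ x)) x)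
    (hw₂0 : w₂ x_m = v₀) (hw₂'0 : deriv w₂ x_m = 0)
    (hw₂inc : StrictMonoOn w₂ (Set.Ico x_m b)) :
    ∀ x ∈ Set.Ioo x_m b, ¬ (w₂ x < w₁ x) := by
  intro xs hxs hlt
  have hE₁ := stmt4_energy A f w₁ x_m b v₀ hA hA0 hA'pos hf_cont hf_pos hb hv₀
    hw₁ hode₁ hw₁0 hw₁'0 hw₁inc
  have hE₂ := stmt4_energy A f w₂ x_m b v₀ hA hA0 hA'pos hf_cont hf_pos hb hv₀
    hw₂ hode₂ hw₂0 hw₂'0 hw₂inc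
  have hBmono := stmt4_Bmono A hA hA'pos
  -- equal values force equal derivatives
  have hder : ∀ x ∈ Set.Ioo x_m b, ∀ y ∈ Set.Ioo x_m b, w₁ x = w₂ y →
      deriv w₁ x = deriv w₂ y := by
    intro x hx y hy hxy
    obtain ⟨e1, p1⟩ := hE₁ x hx
    obtain ⟨e2, p2⟩ := hE₂ y hy
    have heq : (∫ t in (0:ℝ)..(deriv w₁ x), t * deriv A t)
        = (∫ t in (0:ℝ)..(deriv w₂ y), t * deriv A t) := by rw [e1, e2, hxy]
    exact hBmono.injOn (Set.mem_Ici.mpr (le_of_lt p1)) (Set.mem_Ici.mpr (le_of_lt p2)) heq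
  -- setup for the inverse of w₂
  set x' : ℝ := (xs + b)/2 with hx'_def
  have hx'1 : xs < x' := by simp only [hx'_def]; linarith [hxs.2]
  have hx'2 : x' < b := by simp only [hx'_def]; linarith [hxs.2]
  set W' : ℝ := w₂ x' with hW'_def
  have hIccIco : Set.Icc x_m x' ⊆ Set.Ico x_m b :=
    fun z hz => ⟨hz.1, lt_of_le_of_lt hz.2 hx'2⟩
  have hw₂c : ContinuousOn w₂ (Set.Icc x_m x') := (hw₂.continuousOn).mono hIccIco
  have hmono2 : StrictMonoOn w₂ (Set.Icc x_m x') := hw₂inc.mono hIccIco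
  have hx_mx' : x_m ≤ x' := le_of_lt (lt_trans hxs.1 hx'1)
  have hsurj : Set.Icc v₀ W' ⊆ w₂ '' Set.Icc x_m x' := by
    have h := intermediate_value_Icc hx_mx' hw₂c
    rwa [hw₂0] at h
  set G : ℝ → ℝ := Function.invFunOn w₂ (Set.Icc x_m x') with hG_def
  have hG : ∀ v ∈ Set.Icc v₀ W', G v ∈ Set.Icc x_m x' ∧ w₂ (G v) = v := by
    intro v hv
    obtain ⟨s, hs, hsv⟩ := hsurj hv
    exact ⟨Function.invFunOn_mem ⟨s, hs, hsv⟩, Function.invFunOn_eq ⟨s, hs, hsv⟩⟩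
  -- continuity of G
  have hGcont : ∀ a ∈ Set.Ico v₀ W', ContinuousWithinAt G (Set.Icc v₀ W') a := by
    intro a ha
    have haI : a ∈ Set.Icc v₀ W' := ⟨ha.1, le_of_lt ha.2⟩
    obtain ⟨hsmem, hsval⟩ := hG a haI
    rw [ContinuousWithinAt]
    rw [tendsto_order]
    constructor
    · intro l hl
      by_cases hlx : l < x_m
      · filter_upwards [self_mem_nhdsWithin] with v hv
        exact lt_of_lt_of_le hlx (hG v hv).1.1
      · push_neg at hlx
        have hlI : l ∈ Set.Icc x_m x' := ⟨hlx, le_trans (le_of_lt hl) hsmem.2⟩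
        have hwla : w₂ l < a := by rw [← hsval]; exact hmono2 hlI hsmem hl
        filter_upwards [mem_nhdsWithin_of_mem_nhds (Ioi_mem_nhds hwla),
          self_mem_nhdsWithin] with v hv1 hv2
        by_contra hc
        push_neg at hc
        have hle : w₂ (G v) ≤ w₂ l := hmono2.monotoneOn (hG v hv2).1 hlI hc
        rw [(hG v hv2).2] at hle
        exact absurd hv1 (not_lt.mpr hle)
    · intro u hu
      by_cases hux : x' < u
      · filter_upwards [self_mem_nhdsWithin] with v hv
        exact lt_of_le_of_lt (hG v hv).1.2 hux
      · push_neg at hux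
        have huI : u ∈ Set.Icc x_m x' := ⟨le_trans hsmem.1 (le_of_lt hu), hux⟩
        have haw : a < w₂ u := by rw [← hsval]; exact hmono2 hsmem huI hu
        filter_upwards [mem_nhdsWithin_of_mem_nhds (Iio_mem_nhds haw),
          self_mem_nhdsWithin] with v hv1 hv2
        by_contra hc
        push_neg at hc
        have hle : w₂ u ≤ w₂ (G v) := hmono2.monotoneOn huI (hG v hv2).1 hc
        rw [(hG v hv2).2] at hle
        exact absurd hv1 (not_lt.mpr hle)
  -- the crossing point
  set vstar : ℝ := w₂ xs with hvstar_def
  have hvstar1 : v₀ < vstar := by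
    rw [hvstar_def, ← hw₂0]
    exact hw₂inc ⟨le_rfl, hb⟩ (Set.Ioo_subset_Ico_self hxs) hxs.1
  have hvstarW' : vstar < W' :=
    hw₂inc (Set.Ioo_subset_Ico_self hxs) (hIccIco ⟨hx_mx', le_rfl⟩) hx'1
  have hvstar2 : vstar < w₁ xs := hlt
  have hw₁c : ContinuousOn w₁ (Set.Icc x_m xs) :=
    (hw₁.continuousOn).mono (fun z hz => ⟨hz.1, lt_of_le_of_lt hz.2 hxs.2⟩)
  have hvs_mem : vstar ∈ Set.Ioo (w₁ x_m) (w₁ xs) := by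
    rw [hw₁0]; exact ⟨hvstar1, hvstar2⟩
  obtain ⟨x₁, hx₁mem, hx₁val⟩ := intermediate_value_Ioo (le_of_lt hxs.1) hw₁c hvs_mem
  have hx₁Ioo : x₁ ∈ Set.Ioo x_m b := ⟨hx₁mem.1, lt_trans hx₁mem.2 hxs.2⟩
  have hmapsto : ∀ t ∈ Set.Icc x_m x₁, w₁ t ∈ Set.Icc v₀ vstar := by
    intro t ht
    have htI : t ∈ Set.Ico x_m b := ⟨ht.1, lt_of_le_of_lt ht.2 hx₁Ioo.2⟩
    constructor
    · rw [← hw₁0]; exact hw₁inc.monotoneOn ⟨le_rfl, hb⟩ htI ht.1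
    · rw [← hx₁val]
      exact hw₁inc.monotoneOn htI (Set.Ioo_subset_Ico_self hx₁Ioo) ht.2
  have hsubI : Set.Icc v₀ vstar ⊆ Set.Icc v₀ W' :=
    Set.Icc_subset_Icc_right (le_of_lt hvstarW')
  have hsubI' : Set.Icc v₀ vstar ⊆ Set.Ico v₀ W' :=
    fun v hv => ⟨hv.1, lt_of_le_of_lt hv.2 hvstarW'⟩
  have hGC : ContinuousOn G (Set.Icc v₀ vstar) :=
    fun a ha => (hGcont a (hsubI' ha)).mono hsubI
  have hτcont : ContinuousOn (fun t => G (w₁ t)) (Set.Icc x_m x₁) :=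
    hGC.comp (hw₁c.mono (Set.Icc_subset_Icc_right (le_of_lt hx₁mem.2))) hmapsto
  -- derivative of t ↦ G (w₁ t) - t is 0 on the interior
  have hτder : ∀ t ∈ Set.Ioo x_m x₁, HasDerivAt (fun z => G (w₁ z) - z) 0 t := by
    intro t ht
    have htIoo : t ∈ Set.Ioo x_m b := ⟨ht.1, lt_trans ht.2 hx₁Ioo.2⟩
    have hw₁t : w₁ t ∈ Set.Ioo v₀ vstar := by
      constructor
      · rw [← hw₁0]
        exact hw₁inc ⟨le_rfl, hb⟩ (Set.Ioo_subset_Ico_self htIoo) ht.1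
      · rw [← hx₁val]
        exact hw₁inc (Set.Ioo_subset_Ico_self htIoo) (Set.Ioo_subset_Ico_self hx₁Ioo) ht.2
    have hw₁tW : w₁ t ∈ Set.Ioo v₀ W' := ⟨hw₁t.1, lt_trans hw₁t.2 hvstarW'⟩
    have hmemIcc : w₁ t ∈ Set.Icc v₀ W' := ⟨le_of_lt hw₁tW.1, le_of_lt hw₁tW.2⟩
    obtain ⟨hsmem, hsval⟩ := hG _ hmemIcc
    have hsIoo : G (w₁ t) ∈ Set.Ioo x_m b := by
      constructor
      · rcases lt_or_eq_of_le hsmem.1 with h | h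
        · exact h
        · exfalso
          rw [← h, hw₂0] at hsval
          exact lt_irrefl _ (hsval ▸ hw₁t.1)
      · exact lt_of_le_of_lt hsmem.2 hx'2
    have hd₂pos := (hE₂ _ hsIoo).2
    have hw₂s : HasDerivAt w₂ (deriv w₂ (G (w₁ t))) (G (w₁ t)) :=
      (((hw₂.mono Set.Ioo_subset_Ico_self).differentiableOn
        (by norm_num)).differentiableAt (isOpen_Ioo.mem_nhds hsIoo)).hasDerivAt
    have hGat : ContinuousAt G (w₁ t) :=
      (hGcont _ ⟨le_of_lt hw₁tW.1, hw₁tW.2⟩).continuousAt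
        (Icc_mem_nhds hw₁tW.1 hw₁tW.2)
    have hfg : ∀ᶠ v in 𝓝 (w₁ t), w₂ (G v) = v := by
      filter_upwards [Icc_mem_nhds hw₁tW.1 hw₁tW.2] with v hv
      exact (hG v hv).2
    have hG' : HasDerivAt G (deriv w₂ (G (w₁ t)))⁻¹ (w₁ t) :=
      HasDerivAt.of_local_left_inverse hGat hw₂s (ne_of_gt hd₂pos) hfg
    have hw₁d : HasDerivAt w₁ (deriv w₁ t) t :=
      (((hw₁.mono Set.Ioo_subset_Ico_self).differentiableOn
        (by norm_num)).differentiableAt (isOpen_Ioo.mem_nhds htIoo)).hasDerivAt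
    have hcomp : HasDerivAt (fun z => G (w₁ z)) ((deriv w₂ (G (w₁ t)))⁻¹ * deriv w₁ t) t :=
      hG'.comp t hw₁d
    have heq : deriv w₁ t = deriv w₂ (G (w₁ t)) := hder t htIoo _ hsIoo hsval.symm
    have hone : (deriv w₂ (G (w₁ t)))⁻¹ * deriv w₁ t = 1 := by
      rw [heq]
      field_simp
    have hres := hcomp.sub (hasDerivAt_id t)
    rw [hone] at hres
    rw [sub_self] at hres
    exact hres
  -- constancy via MVT
  have hconst : ∀ t₁ ∈ Set.Ioc x_m x₁, G (w₁ x₁) - x₁ = G (w₁ t₁) - t₁ := by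
    intro t₁ ht₁
    have hsub : Set.Icc t₁ x₁ ⊆ Set.Icc x_m x₁ := Set.Icc_subset_Icc_left (le_of_lt ht₁.1)
    have h := constant_of_has_deriv_right_zero (f := fun z => G (w₁ z) - z) (a := t₁) (b := x₁)
      ((hτcont.sub continuousOn_id).mono hsub)
      (fun u hu => (hτder u ⟨lt_of_lt_of_le ht₁.1 hu.1, hu.2⟩).hasDerivWithinAt)
    exact h x₁ ⟨ht₁.2, le_rfl⟩
  -- value at x_m
  have hGv₀ : G v₀ = x_m := by
    have h := hG v₀ ⟨le_rfl, le_of_lt (lt_trans hvstar1 hvstarW')⟩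
    apply hmono2.injOn h.1 ⟨le_rfl, hx_mx'⟩
    rw [h.2, hw₂0]
  have hφcont : ContinuousWithinAt (fun z => G (w₁ z) - z) (Set.Icc x_m x₁) x_m :=
    (hτcont.sub continuousOn_id) x_m ⟨le_rfl, le_of_lt hx₁mem.1⟩
  have hne : (𝓝[Set.Ioc x_m x₁] x_m).NeBot := by
    rw [nhdsWithin_Ioc_eq_nhdsGT hx₁mem.1]
    infer_instance
  have h1 : Tendsto (fun z => G (w₁ z) - z) (𝓝[Set.Ioc x_m x₁] x_m)
      (𝓝 (G (w₁ x_m) - x_m)) :=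
    hφcont.mono_left (nhdsWithin_mono _ Set.Ioc_subset_Icc_self)
  have h2 : Tendsto (fun z => G (w₁ z) - z) (𝓝[Set.Ioc x_m x₁] x_m)
      (𝓝 (G (w₁ x₁) - x₁)) := by
    refine Filter.Tendsto.congr' ?_ tendsto_const_nhds
    filter_upwards [self_mem_nhdsWithin] with z hz
    exact hconst z hz
  have hval : G (w₁ x_m) - x_m = 0 := by rw [hw₁0, hGv₀]; ring
  have hzero : G (w₁ x₁) - x₁ = 0 := by
    rw [tendsto_nhds_unique h2 h1, hval]
  have hGx₁ : G (w₁ x₁) = x₁ := by linarith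
  have hw₂x₁ : w₂ x₁ = vstar := by
    have hmem : w₁ x₁ ∈ Set.Icc v₀ W' := by
      rw [hx₁val]
      exact ⟨le_of_lt hvstar1, le_of_lt hvstarW'⟩
    rw [← hGx₁, (hG (w₁ x₁) hmem).2, hx₁val]
  have hfin : w₂ x₁ < w₂ xs :=
    hw₂inc (Set.Ioo_subset_Ico_self hx₁Ioo) (Set.Ioo_subset_Ico_self hxs) hx₁mem.2
  rw [hw₂x₁, ← hvstar_def] at hfin
  exact lt_irrefl _ hfin

/-- Uniqueness for the IVP `(A(w'))' = f(w)`, `w(x_m)=v₀>0`, `w'(x_m)=0`: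
two strictly increasing solutions on a common interval `(x_m, b)` coincide. -/
theorem stmt4 (A f w₁ w₂ : ℝ → ℝ) (x_m b v₀ : ℝ)
    (hA : ContDiff ℝ 1 A) (hAmono : Monotone A) (hA0 : A 0 = 0)
    (hA'pos : ∀ r > 0, 0 < deriv A r)
    (hf_cont : ContinuousOn f (Set.Ici 0)) (hf_mono : MonotoneOn f (Set.Ici 0))
    (hf_nonneg : ∀ r ≥ (0:ℝ), 0 ≤ f r) (hf_pos : ∀ r > (0:ℝ), 0 < f r)
    (hb : x_m < b) (hv₀ : 0 < v₀)
    (hw₁ : ContDiffOn ℝ 2 w₁ (Set.Ico x_m b))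
    (hode₁ : ∀ x ∈ Set.Ico x_m b, HasDerivAt (fun y => A (deriv w₁ y)) (f (w₁ x)) x)
    (hw₁0 : w₁ x_m = v₀) (hw₁'0 : deriv w₁ x_m = 0)
    (hw₁inc : StrictMonoOn w₁ (Set.Ico x_m b))
    (hw₂ : ContDiffOn ℝ 2 w₂ (Set.Ico x_m b))
    (hode₂ : ∀ x ∈ Set.Ico x_m b, HasDerivAt (fun y => A (deriv w₂ y)) (f (w₂ x)) x)
    (hw₂0 : w₂ x_m = v₀) (hw₂'0 : deriv w₂ x_m = 0)
    (hw₂inc : StrictMonoOn w₂ (Set.Ico x_m b)) :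
    Set.EqOn w₁ w₂ (Set.Ioo x_m b) := by
  intro x hx
  have h1 := stmt4_key A f w₁ w₂ x_m b v₀ hA hAmono hA0 hA'pos hf_cont hf_mono hf_nonneg
    hf_pos hb hv₀ hw₁ hode₁ hw₁0 hw₁'0 hw₁inc hw₂ hode₂ hw₂0 hw₂'0 hw₂inc x hx
  have h2 := stmt4_key A f w₂ w₁ x_m b v₀ hA hAmono hA0 hA'pos hf_cont hf_mono hf_nonneg
    hf_pos hb hv₀ hw₂ hode₂ hw₂0 hw₂'0 hw₂inc hw₁ hode₁ hw₁0 hw₁'0 hw₁inc x hx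
  rcases lt_trichotomy (w₁ x) (w₂ x) with h | h | h
  · exact absurd h h2
  · exact h
  · exact absurd h h1
end

section
/- Assume the Osgood condition ∫_{0⁺} ds / B⁻¹(F(s)) = ∞ (i.e., ∫₀^r ds / B⁻¹(F(s)) diverges for some/all r>0). If v is a nonnegative solution of (A(v'))' = f(v) on ℝ that blows up as |x|→∞ (a large solution on ℝ), then its minimum value v₀ = min_{x∈ℝ} v(x) is strictly positive; in particular v₀ ≠ 0. -/
open Filter Set intervalIntegral MeasureTheory Topology

/-- Under the Osgood condition `∫_{0⁺} ds/B⁻¹(F(s)) = ∞`, any nonnegative large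
solution `v` of `(A(v'))' = f(v)` on `ℝ` (blowing up as `|x| → ∞`) has strictly positive
minimum: if `x₀` attains the minimum of `v`, then `v(x₀) > 0`. -/
theorem stmt5 (A f v F B Binv : ℝ → ℝ) (x₀ : ℝ)
    (hA : ContDiff ℝ 1 A) (hAmono : Monotone A) (hA0 : A 0 = 0)
    (hA'pos : ∀ r > 0, 0 < deriv A r)
    (hf_cont : ContinuousOn f (Set.Ici 0)) (hf_mono : MonotoneOn f (Set.Ici 0))
    (hf0 : f 0 = 0) (hf_pos : ∀ r > (0:ℝ), 0 < f r)
    (hF : ∀ x, F x = ∫ t in (0:ℝ)..x, f t)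
    (hB : ∀ x, B x = ∫ s in (0:ℝ)..x, deriv A s * s)
    (hBinv_left : ∀ x ≥ (0:ℝ), Binv (B x) = x)
    (hBinv_right : ∀ t ≥ (0:ℝ), B (Binv t) = t)
    -- Osgood condition (A2): `∫₀^r ds / B⁻¹(F(s))` diverges for every `r > 0`
    (hOsgood : ∀ r > (0:ℝ), ¬ IntegrableOn (fun s => 1 / Binv (F s)) (Set.Ioc 0 r))
    (hv_nonneg : ∀ x, 0 ≤ v x)
    (hv : ContDiff ℝ 2 v)
    (hode : ∀ x : ℝ, HasDerivAt (fun y => A (deriv v y)) (f (v x)) x)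
    (hblow_top : Tendsto v atTop atTop) (hblow_bot : Tendsto v atBot atTop)
    (hmin : IsMinOn v Set.univ x₀) :
    0 < v x₀ := by
  by_contra hcon
  push_neg at hcon
  have h0 : v x₀ = 0 := le_antisymm hcon (hv_nonneg x₀)
  -- differentiability of v and its derivative
  have hv1 : Differentiable ℝ v := hv.differentiable (by norm_num)
  have hvd : ContDiff ℝ 1 (deriv v) := by
    have h2 : ContDiff ℝ (1 + 1) v := by
      convert hv using 2; norm_num
    exact (contDiff_succ_iff_deriv.mp h2).2.2
  have hv2 : Differentiable ℝ (deriv v) := hvd.differentiable one_ne_zero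
  have hv2d : ∀ x, HasDerivAt (deriv v) (deriv (deriv v) x) x := fun x => (hv2 x).hasDerivAt
  -- values where v vanishes are global minima, hence critical points
  have hderiv0 : ∀ x, v x = 0 → deriv v x = 0 := by
    intro x hx
    have hlm : IsLocalMin v x := Filter.Eventually.of_forall fun y => by
      rw [hx]; exact hv_nonneg y
    exact hlm.deriv_eq_zero
  have hdv0 : deriv v x₀ = 0 := hderiv0 x₀ h0
  -- FTC for B
  have hcontA' : Continuous (deriv A) := hA.continuous_deriv le_rfl
  have hcontBi : Continuous (fun s : ℝ => deriv A s * s) := hcontA'.mul continuous_id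
  have hBd : ∀ y : ℝ, HasDerivAt B (deriv A y * y) y := by
    intro y
    have hBfun : B = fun u => ∫ s in (0:ℝ)..u, deriv A s * s := funext hB
    rw [hBfun]
    exact intervalIntegral.integral_hasDerivAt_right (hcontBi.intervalIntegrable _ _)
      hcontBi.aestronglyMeasurable.stronglyMeasurableAtFilter hcontBi.continuousAt
  -- FTC for F (one-sided at 0)
  have hf_int : ∀ y ≥ (0:ℝ), IntervalIntegrable f volume 0 y := by
    intro y hy
    apply ContinuousOn.intervalIntegrable
    apply hf_cont.mono
    rw [Set.uIcc_of_le hy]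
    exact Icc_subset_Ici_self
  have hFd : ∀ y ≥ (0:ℝ), HasDerivWithinAt F (f y) (Ici 0) y := by
    intro y hy
    have hFfun : F = fun u => ∫ t in (0:ℝ)..u, f t := funext hF
    rcases eq_or_lt_of_le hy with h | h
    · subst h
      rw [hFfun]
      exact intervalIntegral.integral_hasDerivWithinAt_right (hf_int 0 le_rfl)
        ⟨Ici 0, Filter.mem_of_superset self_mem_nhdsWithin Ioi_subset_Ici_self,
          hf_cont.aestronglyMeasurable measurableSet_Ici⟩
        ((hf_cont 0 Set.self_mem_Ici).mono Ioi_subset_Ici_self)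
    · have hni : Ici (0:ℝ) ∈ 𝓝 y := Ici_mem_nhds h
      have hca : ContinuousAt f y := hf_cont.continuousAt hni
      have : HasDerivAt F (f y) y := by
        rw [hFfun]
        exact intervalIntegral.integral_hasDerivAt_right (hf_int y hy)
          ⟨Ici 0, hni, hf_cont.aestronglyMeasurable measurableSet_Ici⟩ hca
      exact this.hasDerivWithinAt
  -- derivative of F ∘ v
  have hFv : ∀ x, HasDerivAt (fun y => F (v y)) (deriv v x * f (v x)) x := by
    intro x
    have := (hFd (v x) (hv_nonneg x)).scomp_hasDerivAt x (hv1 x).hasDerivAt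
      (fun y => hv_nonneg y)
    simpa [Function.comp_def, smul_eq_mul] using this
  -- chain rule identity from the ODE
  have hkey : ∀ x, deriv A (deriv v x) * deriv (deriv v) x = f (v x) := by
    intro x
    have h1 := ((hA.differentiable one_ne_zero (deriv v x)).hasDerivAt).comp x (hv2d x)
    simp only [Function.comp_def] at h1
    exact h1.unique (hode x)
  -- derivative of B ∘ (deriv v)
  have hBv : ∀ x, HasDerivAt (fun y => B (deriv v y))
      (deriv A (deriv v x) * deriv v x * deriv (deriv v) x) x := by
    intro x
    have := (hBd (deriv v x)).comp x (hv2d x)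
    simpa [Function.comp_def] using this
  -- energy identity
  have hEn : ∀ x, B (deriv v x) = F (v x) := by
    have hB0 : B 0 = 0 := by rw [hB]; simp
    have hF0 : F 0 = 0 := by rw [hF]; simp
    have hE : ∀ x, B (deriv v x) - F (v x) = B (deriv v x₀) - F (v x₀) := by
      intro x
      have hdiff : Differentiable ℝ (fun y => B (deriv v y) - F (v y)) := fun y =>
        ((hBv y).differentiableAt).sub ((hFv y).differentiableAt)
      apply is_const_of_deriv_eq_zero hdiff ?_ x x₀
      intro y
      rw [HasDerivAt.deriv (f := fun y => B (deriv v y) - F (v y)) ((hBv y).sub (hFv y))]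
      linear_combination deriv v y * hkey y
    intro x
    have := hE x
    rw [hdv0, h0, hB0, hF0] at this
    linarith
  -- positivity of F
  have hFpos : ∀ r > (0:ℝ), 0 < F r := by
    intro r hr
    rw [hF]
    exact intervalIntegral.intervalIntegral_pos_of_pos_on (hf_int r hr.le)
      (fun x hx => hf_pos x hx.1) hr
  -- f ∘ v is nonnegative
  have hfv_nonneg : ∀ x, 0 ≤ f (v x) := by
    intro x
    have := hf_mono Set.self_mem_Ici (hv_nonneg x) (hv_nonneg x)
    rw [hf0] at this; exact this
  -- A ∘ v' is monotone
  have hAmonov : Monotone (fun x => A (deriv v x)) := by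
    apply monotone_of_deriv_nonneg (fun x => (hode x).differentiableAt)
    intro x
    rw [(hode x).deriv]
    exact hfv_nonneg x
  -- nonneg derivative on [x₀, ∞)
  have hdnn : ∀ x, x₀ ≤ x → 0 ≤ deriv v x := by
    intro x hx
    by_contra hneg
    push_neg at hneg
    have h2 : (0:ℝ) ≤ A (deriv v x) := by
      calc (0:ℝ) = A (deriv v x₀) := by rw [hdv0, hA0]
        _ ≤ A (deriv v x) := hAmonov hx
    have hAflat : ∀ u ∈ Icc (deriv v x) 0, A u = 0 := by
      intro u hu
      have h1 : A (deriv v x) ≤ A u := hAmono hu.1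
      have h3 : A u ≤ A 0 := hAmono hu.2
      have h4 : A (deriv v x) ≤ A 0 := hAmono hneg.le
      rw [hA0] at h3 h4
      have : A (deriv v x) = 0 := le_antisymm h4 h2
      linarith
    have hA'0 : ∀ u ∈ Ioo (deriv v x) 0, deriv A u * u = 0 := by
      intro u hu
      have hz : deriv A u = 0 := by
        have hev : A =ᶠ[𝓝 u] fun _ => (0:ℝ) := by
          filter_upwards [Ioo_mem_nhds hu.1 hu.2] with z hz
          exact hAflat z (Ioo_subset_Icc_self hz)
        rw [hev.deriv_eq]
        exact deriv_const _ _
      rw [hz, zero_mul]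
    have hBz : B (deriv v x) = 0 := by
      rw [hB, intervalIntegral.integral_symm]
      have : (∫ s in (deriv v x)..(0:ℝ), deriv A s * s) = 0 := by
        rw [intervalIntegral.integral_of_le hneg.le,
          MeasureTheory.integral_Ioc_eq_integral_Ioo,
          MeasureTheory.setIntegral_congr_fun measurableSet_Ioo
            (fun u hu => hA'0 u hu)]
        simp
      rw [this, neg_zero]
    have hFz : F (v x) = 0 := by rw [← hEn x, hBz]
    have hvx : v x = 0 := by
      by_contra hne
      have := hFpos (v x) (lt_of_le_of_ne (hv_nonneg x) (Ne.symm hne))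
      linarith
    have := hderiv0 x hvx
    linarith
  -- the ODE in Binv form
  have hBinvE : ∀ x, x₀ ≤ x → Binv (F (v x)) = deriv v x := by
    intro x hx
    rw [← hEn x]
    exact hBinv_left _ (hdnn x hx)
  -- pick a point where v is large
  obtain ⟨x₁, hx₁, hvx₁⟩ : ∃ x₁, x₀ ≤ x₁ ∧ 1 ≤ v x₁ := by
    have h1 := hblow_top.eventually_ge_atTop 1
    have h2 := eventually_ge_atTop x₀
    exact (h2.and h1).exists
  have hrpos : (0:ℝ) < v x₁ := lt_of_lt_of_le one_pos hvx₁
  -- the last zero of v before x₁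
  set Z : Set ℝ := Icc x₀ x₁ ∩ v ⁻¹' {0} with hZ
  have hZc : IsCompact Z := isCompact_Icc.inter_right (isClosed_singleton.preimage hv.continuous)
  have hZne : Z.Nonempty := ⟨x₀, ⟨le_rfl, hx₁⟩, h0⟩
  have ha := hZc.sSup_mem hZne
  set a := sSup Z with haa
  have hav : v a = 0 := ha.2
  have haI : a ∈ Icc x₀ x₁ := ha.1
  have hax₁ : a < x₁ := lt_of_le_of_ne haI.2 (fun h => by rw [h] at hav; linarith)
  have hub : ∀ z ∈ Z, z ≤ a := fun z hz => le_csSup hZc.bddAbove hz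
  have hvpos : ∀ x ∈ Ioc a x₁, 0 < v x := by
    intro x hx
    rcases (hv_nonneg x).lt_or_eq with h | h
    · exact h
    · exact absurd (hub x ⟨⟨le_trans haI.1 hx.1.le, hx.2⟩, h.symm⟩) (not_le.mpr hx.1)
  have hdpos : ∀ x ∈ Ioc a x₁, 0 < deriv v x := by
    intro x hx
    have hge : x₀ ≤ x := le_trans haI.1 hx.1.le
    rcases (hdnn x hge).lt_or_eq with h | h
    · exact h
    · exfalso
      have : F (v x) = 0 := by
        rw [← hEn x, ← h, hB]; simp
      linarith [hFpos (v x) (hvpos x hx)]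
  have hmono : StrictMonoOn v (Icc a x₁) := by
    apply strictMonoOn_of_deriv_pos (convex_Icc a x₁) hv.continuous.continuousOn
    intro x hx
    rw [interior_Icc] at hx
    exact hdpos x ⟨hx.1, hx.2.le⟩
  -- image of (a, x₁] under v
  have himg : v '' Ioc a x₁ = Ioc 0 (v x₁) := by
    apply Subset.antisymm
    · rintro _ ⟨x, hx, rfl⟩
      exact ⟨hvpos x hx,
        hmono.monotoneOn ⟨hx.1.le, hx.2⟩ (right_mem_Icc.mpr hax₁.le) hx.2⟩
    · have := intermediate_value_Ioc hax₁.le hv.continuous.continuousOn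
      rw [hav] at this
      exact this
  -- transfer integrability via change of variables
  have hmeasS : MeasurableSet (Ioc a x₁) := measurableSet_Ioc
  have hder : ∀ x ∈ Ioc a x₁, HasDerivWithinAt v (deriv v x) (Ioc a x₁) x :=
    fun x _ => ((hv1 x).hasDerivAt).hasDerivWithinAt
  have hinj : InjOn v (Ioc a x₁) := hmono.injOn.mono Ioc_subset_Icc_self
  have hiff := MeasureTheory.integrableOn_image_iff_integrableOn_abs_deriv_smul hmeasS hder hinj
    (fun s => 1 / Binv (F s))
  rw [himg] at hiff
  apply hOsgood (v x₁) hrpos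
  rw [hiff]
  have hone : IntegrableOn (fun _ : ℝ => (1:ℝ)) (Ioc a x₁) volume :=
    MeasureTheory.integrableOn_const measure_Ioc_lt_top.ne
  apply hone.congr_fun ?_ hmeasS
  intro x hx
  have hd := hdpos x hx
  have hBi := hBinvE x (le_trans haI.1 hx.1.le)
  simp only [smul_eq_mul]
  rw [hBi, abs_of_pos hd]
  field_simp
end

section
/- Assume the Keller–Osserman condition (A1) and the Osgood condition (A2). Then there is no solution v of (A(v'))' = f(v) defined on all of ℝ with v(x) → ∞ as |x| → ∞ (non-existence of large solutions on ℝ). -/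
open Filter Set intervalIntegral MeasureTheory

private lemma deriv_nonneg_of_monotone' {g : ℝ → ℝ} {g' x : ℝ}
    (hm : Monotone g) (h : HasDerivAt g g' x) : 0 ≤ g' := by
  have h1 := hasDerivAt_iff_tendsto_slope.mp h
  have h2 : Tendsto (slope g x) (nhdsWithin x (Ioi x)) (nhds g') :=
    h1.mono_left (nhdsWithin_mono x (fun y hy => ne_of_gt hy))
  refine ge_of_tendsto h2 ?_
  filter_upwards [self_mem_nhdsWithin] with y hy
  rw [slope_def_field]
  exact div_nonneg (sub_nonneg.2 (hm (le_of_lt hy))) (sub_nonneg.2 (le_of_lt hy))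

/-- Under the Keller–Osserman condition (A1) and the Osgood condition (A2),
there is no large solution of `(A(v'))' = f(v)` on all of `ℝ`, i.e. no (nonnegative, C²)
solution with `v(x) → ∞` as `|x| → ∞`. -/
theorem stmt6 (A f F B Binv : ℝ → ℝ)
    (hA : ContDiff ℝ 1 A) (hAmono : Monotone A) (hA0 : A 0 = 0)
    (hA'pos : ∀ r > 0, 0 < deriv A r)
    (hf_cont : ContinuousOn f (Set.Ici 0)) (hf_mono : MonotoneOn f (Set.Ici 0))
    (hf0 : f 0 = 0) (hf_pos : ∀ r > (0:ℝ), 0 < f r) (hf_top : Tendsto f atTop atTop)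
    (hF : ∀ x, F x = ∫ t in (0:ℝ)..x, f t)
    (hB : ∀ x, B x = ∫ s in (0:ℝ)..x, deriv A s * s)
    (hBinv_left : ∀ x ≥ (0:ℝ), Binv (B x) = x)
    (hBinv_right : ∀ t ≥ (0:ℝ), B (Binv t) = t)
    -- (A1) Keller–Osserman condition
    (hKO : ∀ r > (0:ℝ), IntegrableOn (fun s => 1 / Binv (F s)) (Set.Ioi r))
    -- (A2) Osgood condition
    (hOsgood : ∀ r > (0:ℝ), ¬ IntegrableOn (fun s => 1 / Binv (F s)) (Set.Ioc 0 r)) :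
    ¬ ∃ v : ℝ → ℝ, (∀ x, 0 ≤ v x) ∧ ContDiff ℝ 2 v ∧
        (∀ x : ℝ, HasDerivAt (fun y => A (deriv v y)) (f (v x)) x) ∧
        Tendsto v atTop atTop ∧ Tendsto v atBot atTop := by
  rintro ⟨v, hv0, hv2, hODE, htop, hbot⟩
  -- basic regularity facts
  have hvd : Differentiable ℝ v := hv2.differentiable two_ne_zero
  have hv' : ∀ x, HasDerivAt v (deriv v x) x := fun x => (hvd x).hasDerivAt
  have hv1 : ContDiff ℝ 1 (deriv v) := by
    have := (contDiff_succ_iff_deriv (n := 1)).mp (by exact_mod_cast hv2)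
    exact this.2.2
  have hv'd : Differentiable ℝ (deriv v) := hv1.differentiable one_ne_zero
  have hv'' : ∀ x, HasDerivAt (deriv v) (deriv (deriv v) x) x := fun x => (hv'd x).hasDerivAt
  have hvc : Continuous v := hvd.continuous
  have hAd : Differentiable ℝ A := hA.differentiable one_ne_zero
  have hA'c : Continuous (deriv A) := hA.continuous_deriv le_rfl
  have hA'nonneg : ∀ s, 0 ≤ deriv A s := fun s =>
    deriv_nonneg_of_monotone' hAmono ((hAd s).hasDerivAt)
  have hfnonneg : ∀ r, 0 ≤ r → 0 ≤ f r := fun r hr => by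
    have := hf_mono (mem_Ici.mpr le_rfl) (mem_Ici.mpr hr) hr
    rwa [hf0] at this
  -- interval integrability of f on nonnegative intervals
  have hfint : ∀ p q : ℝ, 0 ≤ p → 0 ≤ q → IntervalIntegrable f volume p q := by
    intro p q hp hq
    apply ContinuousOn.intervalIntegrable
    apply hf_cont.mono
    intro t ht
    rcases le_total p q with h | h
    · rw [uIcc_of_le h] at ht; exact le_trans hp ht.1
    · rw [uIcc_of_ge h] at ht; exact le_trans hq ht.1
  -- facts about F
  have hFdiff : ∀ a b : ℝ, 0 ≤ a → a ≤ b → F b - F a = ∫ t in a..b, f t := by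
    intro a b ha hab
    rw [hF, hF]
    exact integral_interval_sub_left (hfint 0 b le_rfl (le_trans ha hab)) (hfint 0 a le_rfl ha)
  have hFpos : ∀ r : ℝ, 0 < r → 0 < F r := by
    intro r hr
    rw [hF]
    exact intervalIntegral_pos_of_pos_on (hfint 0 r le_rfl hr.le)
      (fun x hx => hf_pos x hx.1) hr
  have hFsub : ∀ a b : ℝ, 0 ≤ b → b ≤ a → F (a - b) ≤ F a - F b := by
    intro a b hb hba
    have ha : 0 ≤ a := le_trans hb hba
    rw [hFdiff b a hb hba]
    have hcomp : IntervalIntegrable (fun t => f (t - b)) volume b a := by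
      have := (hfint 0 (a - b) le_rfl (by linarith)).comp_sub_right b
      simpa using this
    have h1 : (∫ t in b..a, f (t - b)) ≤ ∫ t in b..a, f t := by
      apply intervalIntegral.integral_mono_on hba hcomp (hfint b a hb ha)
      intro t ht
      exact hf_mono (mem_Ici.mpr (by linarith [ht.1])) (mem_Ici.mpr (le_trans hb ht.1))
        (by linarith)
    have h2 : (∫ t in b..a, f (t - b)) = F (a - b) := by
      have h3 := intervalIntegral.integral_comp_sub_right (a := b) (b := a) f b
      rw [hF (a - b)]
      simpa using h3
    linarith
  -- facts about B
  have hBfun : B = fun u => ∫ s in (0:ℝ)..u, deriv A s * s := funext hB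
  have hA'mul : Continuous (fun s : ℝ => deriv A s * s) := hA'c.mul continuous_id
  have hBder : ∀ r : ℝ, HasDerivAt B (deriv A r * r) r := by
    intro r
    rw [hBfun]
    exact intervalIntegral.integral_hasDerivAt_right (hA'mul.intervalIntegrable 0 r)
      (hA'mul.stronglyMeasurableAtFilter _ _) hA'mul.continuousAt
  have hBcont : Continuous B :=
    continuous_iff_continuousAt.mpr fun x => (hBder x).differentiableAt.continuousAt
  have hB0 : B 0 = 0 := by rw [hB]; simp
  have hBpos : ∀ t : ℝ, 0 ≤ B t := by
    intro t
    rcases le_total 0 t with h | h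
    · rw [hB]
      exact intervalIntegral.integral_nonneg h
        (fun u hu => mul_nonneg (hA'nonneg u) hu.1)
    · rw [hB, intervalIntegral.integral_symm]
      have h1 : 0 ≤ ∫ s in t..0, -(deriv A s * s) :=
        intervalIntegral.integral_nonneg h
          (fun u hu => neg_nonneg.mpr (mul_nonpos_of_nonneg_of_nonpos (hA'nonneg u) hu.2))
      rw [intervalIntegral.integral_neg] at h1
      linarith
  have hBsm : StrictMonoOn B (Ici 0) := by
    apply strictMonoOn_of_deriv_pos (convex_Ici 0) hBcont.continuousOn
    intro x hx
    rw [interior_Ici] at hx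
    rw [(hBder x).deriv]
    exact mul_pos (hA'pos x hx) hx
  -- FTC for F at positive points
  have hFder : ∀ p : ℝ, 0 < p → HasDerivAt F (f p) p := by
    intro p hp
    have hmeas : StronglyMeasurableAtFilter f (nhds p) := by
      apply ContinuousOn.stronglyMeasurableAtFilter (s := Ioi (0:ℝ)) isOpen_Ioi
        (hf_cont.mono Ioi_subset_Ici_self) p hp
    rw [show F = fun u => ∫ t in (0:ℝ)..u, f t from funext hF]
    exact intervalIntegral.integral_hasDerivAt_right (hfint 0 p le_rfl hp.le) hmeas
      (hf_cont.continuousAt (Ici_mem_nhds hp))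
  -- global minimum of v
  obtain ⟨x0, hx0⟩ : ∃ x0, ∀ y, v x0 ≤ v y := by
    apply hvc.exists_forall_le
    rw [cocompact_eq_atBot_atTop]
    exact tendsto_sup.mpr ⟨hbot, htop⟩
  have hx0' : deriv v x0 = 0 := by
    have hloc : IsLocalMin v x0 := Filter.Eventually.of_forall fun y => hx0 y
    exact hloc.deriv_eq_zero
  -- A (v') is monotone and nonnegative to the right of x0
  have hψmono : Monotone (fun x => A (deriv v x)) := by
    apply monotone_of_deriv_nonneg (fun x => (hODE x).differentiableAt)
    intro x
    rw [(hODE x).deriv]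
    exact hfnonneg _ (hv0 x)
  have hψ0 : ∀ x, x0 ≤ x → 0 ≤ A (deriv v x) := by
    intro x hx
    have := hψmono hx
    simpa [hx0', hA0] using this
  -- choice of points x2 ≤ x3 and the "last minimum" x3 on [x2, ∞)
  set m := v x0 with hm
  have hm0 : 0 ≤ m := hv0 x0
  obtain ⟨x2', hx2'⟩ := eventually_atTop.mp (htop.eventually_ge_atTop (m + 1))
  set x2 := max x2' x0 with hx2def
  have hvx2 : ∀ y, x2 ≤ y → m + 1 ≤ v y := fun y hy =>
    hx2' y (le_trans (le_max_left _ _) hy)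
  obtain ⟨T', hT'⟩ := eventually_atTop.mp (htop.eventually_ge_atTop (v x2 + 1))
  set T := max T' x2 with hTdef
  have hx2T : x2 ≤ T := le_max_right _ _
  have hafter : ∀ y, T ≤ y → v x2 + 1 ≤ v y := fun y hy =>
    hT' y (le_trans (le_max_left _ _) hy)
  obtain ⟨xm, hxm_mem, hxm⟩ :=
    isCompact_Icc.exists_isMinOn (nonempty_Icc.mpr hx2T) hvc.continuousOn
  have hxmle : ∀ y ∈ Icc x2 T, v xm ≤ v y := fun y hy => hxm hy
  set Z : Set ℝ := {x | x ∈ Icc x2 T ∧ v x ≤ v xm} with hZdef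
  have hZc : IsClosed Z := by
    have hZeq : Z = Icc x2 T ∩ {x | v x ≤ v xm} := by ext x; simp [hZdef]
    rw [hZeq]
    exact isClosed_Icc.inter (isClosed_le hvc continuous_const)
  have hZne : Z.Nonempty := ⟨xm, hxm_mem, le_rfl⟩
  have hZbdd : BddAbove Z := BddAbove.mono (fun x hx => hx.1) bddAbove_Icc
  set x3 := sSup Z with hx3def
  have hx3Z : x3 ∈ Z := hZc.csSup_mem hZne hZbdd
  have hx3x2 : x2 ≤ x3 := hx3Z.1.1
  have hx0x3 : x0 ≤ x3 := le_trans (le_max_right x2' x0) hx3x2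
  have hvx3ge : m + 1 ≤ v x3 := hvx2 x3 hx3x2
  have hx3pos : 0 < v x3 := by linarith
  have hvpos : ∀ y, x2 ≤ y → 0 < v y := fun y hy => by linarith [hvx2 y hy]
  have hx3strict : ∀ y, x3 < y → v x3 < v y := by
    intro y hy
    rcases le_or_gt y T with h | h
    · by_contra hle
      push_neg at hle
      have hyZ : y ∈ Z := ⟨⟨le_trans hx3x2 hy.le, h⟩, le_trans hle hx3Z.2⟩
      exact absurd (le_csSup hZbdd hyZ) (not_le.mpr hy)
    · have h1 := hafter y h.le
      have h2 : v xm ≤ v x2 := hxmle x2 ⟨le_rfl, hx2T⟩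
      have h3 := hx3Z.2
      linarith
  -- energy identity
  set c := F (v x3) - B (deriv v x3) with hcdef
  have hcle : c ≤ F (v x3) := by
    have := hBpos (deriv v x3); rw [hcdef]; linarith
  have hgd : ∀ y, 0 < v y → HasDerivAt (fun z => B (deriv v z) - F (v z)) 0 y := by
    intro y hy
    have h1 : HasDerivAt (fun z => B (deriv v z))
        (deriv A (deriv v y) * deriv v y * deriv (deriv v) y) y :=
      (hBder (deriv v y)).comp y (hv'' y)
    have h2 : HasDerivAt (fun z => F (v z)) (f (v y) * deriv v y) y :=
      (hFder (v y) hy).comp y (hv' y)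
    have h3 : HasDerivAt (fun z => A (deriv v z))
        (deriv A (deriv v y) * deriv (deriv v) y) y :=
      ((hAd (deriv v y)).hasDerivAt).comp y (hv'' y)
    have h4 : deriv A (deriv v y) * deriv (deriv v) y = f (v y) := h3.unique (hODE y)
    have h5 := h1.sub h2
    have h6 : deriv A (deriv v y) * deriv v y * deriv (deriv v) y - f (v y) * deriv v y = 0 := by
      have : deriv A (deriv v y) * deriv v y * deriv (deriv v) y
          = (deriv A (deriv v y) * deriv (deriv v) y) * deriv v y := by ring
      rw [this, h4]; ring
    rwa [h6] at h5
  have hE : ∀ x, x3 ≤ x → B (deriv v x) = F (v x) - c := by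
    intro x hx
    have hkey : ∀ y ∈ Icc x3 x, (fun z => B (deriv v z) - F (v z)) y
        = (fun z => B (deriv v z) - F (v z)) x3 := by
      apply constant_of_has_deriv_right_zero
      · intro y hy
        exact ((hgd y (hvpos y (le_trans hx3x2 hy.1))).continuousAt).continuousWithinAt
      · intro y hy
        exact (hgd y (hvpos y (le_trans hx3x2 hy.1))).hasDerivWithinAt
    have := hkey x ⟨hx, le_rfl⟩
    simp only at this
    rw [hcdef]
    linarith
  -- positivity of v' to the right of x3
  have hFgt : ∀ x, x3 < x → 0 < F (v x) - c := by
    intro x hx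
    have hvv : v x3 < v x := hx3strict x hx
    have h1 : F (v x) - F (v x3) = ∫ t in (v x3)..(v x), f t :=
      hFdiff (v x3) (v x) hx3pos.le hvv.le
    have h2 : 0 < ∫ t in (v x3)..(v x), f t := by
      apply intervalIntegral_pos_of_pos_on (hfint (v x3) (v x) hx3pos.le (by linarith))
        (fun t ht => hf_pos t (lt_trans hx3pos ht.1)) hvv
    linarith
  have hv'pos : ∀ x, x3 < x → 0 < deriv v x := by
    intro x hx
    have hBx : B (deriv v x) = F (v x) - c := hE x hx.le
    by_contra hcon
    push_neg at hcon
    have hA1 : A (deriv v x) ≤ 0 := by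
      have := hAmono hcon; rwa [hA0] at this
    have hA2 : 0 ≤ A (deriv v x) := hψ0 x (le_trans hx0x3 hx.le)
    have hAeq : A (deriv v x) = 0 := le_antisymm hA1 hA2
    have hAzero : ∀ s, deriv v x ≤ s → s ≤ 0 → A s = 0 := fun s h1 h2 =>
      le_antisymm (hA0 ▸ hAmono h2) (hAeq ▸ hAmono h1)
    have hA'zero : EqOn (fun s => deriv A s * s) (fun _ => (0:ℝ)) (Ioc (deriv v x) 0) := by
      intro s hs
      rcases eq_or_lt_of_le hs.2 with h0 | h0
      · simp [h0]
      · have hev : (fun _ => (0:ℝ)) =ᶠ[nhds s] A := by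
          have hmem : Ioo (deriv v x) 0 ∈ nhds s := isOpen_Ioo.mem_nhds ⟨hs.1, h0⟩
          filter_upwards [hmem] with u hu
          exact (hAzero u hu.1.le hu.2.le).symm
        have : deriv A s = 0 := by
          rw [← hev.deriv_eq, deriv_const]
        simp [this]
    have hBzero : B (deriv v x) = 0 := by
      rw [hB, intervalIntegral.integral_symm,
        intervalIntegral.integral_of_le hcon,
        MeasureTheory.setIntegral_congr_fun measurableSet_Ioc hA'zero]
      simp
    have := hFgt x hx
    rw [hBx] at hBzero
    linarith
  have hv'inv : ∀ x, x3 < x → Binv (F (v x) - c) = deriv v x := by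
    intro x hx
    rw [← hE x hx.le]
    exact hBinv_left _ (hv'pos x hx).le
  -- lower bound Binv (F (v x - v x3)) for v'
  have hw : ∀ x, x3 < x →
      0 < Binv (F (v x - v x3)) ∧ Binv (F (v x - v x3)) ≤ deriv v x := by
    intro x hx
    have hvv : v x3 < v x := hx3strict x hx
    have ht1pos : 0 < F (v x - v x3) := hFpos _ (by linarith)
    have ht1le : F (v x - v x3) ≤ B (deriv v x) := by
      rw [hE x hx.le]
      have h1 : F (v x - v x3) ≤ F (v x) - F (v x3) := hFsub (v x) (v x3) hx3pos.le hvv.le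
      linarith
    have hmem : F (v x - v x3) ∈ Icc (B 0) (B (deriv v x)) :=
      ⟨by rw [hB0]; exact ht1pos.le, ht1le⟩
    obtain ⟨w, hwmem, hweq⟩ :=
      intermediate_value_Icc (hv'pos x hx).le hBcont.continuousOn hmem
    have hBinvw : Binv (F (v x - v x3)) = w := by rw [← hweq, hBinv_left w hwmem.1]
    constructor
    · rw [hBinvw]
      rcases eq_or_lt_of_le hwmem.1 with h0 | h0
      · exfalso; rw [← h0, hB0] at hweq; linarith
      · exact h0
    · rw [hBinvw]; exact hwmem.2
  -- final contradiction via change of variables and (A1)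
  set x4 := x3 + 1 with hx4def
  have hx3x4 : x3 < x4 := by rw [hx4def]; linarith
  set δ := v x4 - v x3 with hδdef
  have hδpos : 0 < δ := by
    have := hx3strict x4 hx3x4; rw [hδdef]; linarith
  set k : ℝ → ℝ := fun s => 1 / Binv (F s) with hkdef
  have hKOint : IntegrableOn k (Ioi (δ / 2)) := hKO _ (by linarith)
  set C := ∫ s in Ioi (δ / 2), |k s| with hCdef
  have hC0 : 0 ≤ C := by
    rw [hCdef]
    exact setIntegral_nonneg measurableSet_Ioi (fun s _ => abs_nonneg _)
  set X := x4 + C + 1 with hXdef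
  have hx4X : x4 ≤ X := by rw [hXdef]; linarith
  set S := Icc x4 X with hSdef
  -- v is strictly monotone on S
  have hsm : StrictMonoOn v S := by
    apply strictMonoOn_of_deriv_pos (convex_Icc x4 X) hvc.continuousOn
    intro x hx
    rw [interior_Icc] at hx
    exact hv'pos x (lt_trans hx3x4 hx.1)
  have hinj : InjOn v S := hsm.injOn
  have hx4S : x4 ∈ S := ⟨le_rfl, hx4X⟩
  have hXS : X ∈ S := ⟨hx4X, le_rfl⟩
  have hvle : v x4 ≤ v X := hsm.monotoneOn hx4S hXS hx4X
  have hvderivS : ∀ t ∈ S, HasDerivWithinAt v (deriv v t) S t :=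
    fun t _ => (hv' t).hasDerivWithinAt
  set g : ℝ → ℝ := fun s => 1 / Binv (F (s - v x3)) with hgdef
  have himg_sub : v '' S ⊆ Icc (v x4) (v X) := by
    rintro _ ⟨t, ht, rfl⟩
    exact ⟨hsm.monotoneOn hx4S ht ht.1, hsm.monotoneOn ht hXS ht.2⟩
  -- integrability of g
  have hgiiK : IntervalIntegrable k volume (v x4 - v x3) (v X - v x3) := by
    apply (intervalIntegrable_iff_integrableOn_Ioc_of_le (by linarith)).mpr
    apply hKOint.mono_set
    intro s hs
    have : δ < s := by rw [hδdef]; exact hs.1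
    exact mem_Ioi.mpr (by linarith)
  have hgii : IntervalIntegrable g volume (v x4) (v X) := by
    have h1 := hgiiK.comp_sub_right (v x3)
    have e1 : v x4 - v x3 + v x3 = v x4 := by ring
    have e2 : v X - v x3 + v x3 = v X := by ring
    rw [e1, e2] at h1
    exact h1
  have hgint_Ioc : IntegrableOn g (Ioc (v x4) (v X)) :=
    (intervalIntegrable_iff_integrableOn_Ioc_of_le hvle).mp hgii
  have hgint_Icc : IntegrableOn g (Icc (v x4) (v X)) :=
    (integrableOn_Icc_iff_integrableOn_Ioc).mpr hgint_Ioc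
  have hgint_img : IntegrableOn g (v '' S) := hgint_Icc.mono_set himg_sub
  have hint_S : IntegrableOn (fun t => |deriv v t| * g (v t)) S := by
    have h1 := (integrableOn_image_iff_integrableOn_abs_deriv_smul
      measurableSet_Icc hvderivS hinj g).mp hgint_img
    simpa [smul_eq_mul] using h1
  -- lower bound
  have hlow : X - x4 ≤ ∫ t in S, |deriv v t| * g (v t) := by
    have h1 : ∫ t in S, (1:ℝ) = X - x4 := by
      rw [setIntegral_const, smul_eq_mul, mul_one, hSdef,
        Real.volume_real_Icc_of_le hx4X]
    rw [← h1]
    apply setIntegral_mono_on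
    · exact integrableOn_const (by rw [hSdef, Real.volume_Icc]; exact ENNReal.ofReal_ne_top)
    · exact hint_S
    · exact measurableSet_Icc
    · intro t ht
      have hx3t : x3 < t := lt_of_lt_of_le hx3x4 ht.1
      obtain ⟨hw1, hw2⟩ := hw t hx3t
      have hv't : 0 < deriv v t := hv'pos t hx3t
      rw [abs_of_pos hv't]
      have : g (v t) = 1 / Binv (F (v t - v x3)) := rfl
      rw [this, mul_one_div, le_div_iff₀ hw1, one_mul]
      exact hw2
  -- change of variables
  have heq : ∫ t in S, |deriv v t| * g (v t) = ∫ s in v '' S, g s := by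
    have h1 := integral_image_eq_integral_abs_deriv_smul measurableSet_Icc hvderivS hinj g
    simp only [smul_eq_mul] at h1
    exact h1.symm
  -- upper bounds
  have hup1 : ∫ s in v '' S, g s ≤ ∫ s in v '' S, |g s| :=
    setIntegral_mono hgint_img hgint_img.abs (fun s => le_abs_self _)
  have hup2 : ∫ s in v '' S, |g s| ≤ ∫ s in Ioc (v x4) (v X), |g s| := by
    apply setIntegral_mono_set hgint_Ioc.abs
      (Filter.Eventually.of_forall fun s => abs_nonneg _)
    have h1 : v '' S ≤ᵐ[volume] Icc (v x4) (v X) :=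
      HasSubset.Subset.eventuallyLE himg_sub
    have h2 : Icc (v x4) (v X) ≤ᵐ[volume] Ioc (v x4) (v X) :=
      Filter.EventuallyEq.le Ioc_ae_eq_Icc.symm
    exact h1.trans h2
  have hup3 : ∫ s in Ioc (v x4) (v X), |g s| ≤ C := by
    have e1 : ∫ s in Ioc (v x4) (v X), |g s| = ∫ s in (v x4)..(v X), |g s| :=
      (intervalIntegral.integral_of_le hvle).symm
    have e2 : ∫ s in (v x4)..(v X), |g s| = ∫ s in (v x4 - v x3)..(v X - v x3), |k s| := by
      have h1 := intervalIntegral.integral_comp_sub_right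
        (a := v x4) (b := v X) (fun s => |k s|) (v x3)
      exact h1
    have hle2 : v x4 - v x3 ≤ v X - v x3 := by linarith
    have e3 : ∫ s in (v x4 - v x3)..(v X - v x3), |k s|
        = ∫ s in Ioc (v x4 - v x3) (v X - v x3), |k s| :=
      intervalIntegral.integral_of_le hle2
    have h4 : ∫ s in Ioc (v x4 - v x3) (v X - v x3), |k s| ≤ C := by
      rw [hCdef]
      apply setIntegral_mono_set hKOint.abs
        (Filter.Eventually.of_forall fun s => abs_nonneg _)
      apply HasSubset.Subset.eventuallyLE
      intro s hs
      have : δ < s := by rw [hδdef]; exact hs.1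
      exact mem_Ioi.mpr (by linarith)
    rw [e1, e2, e3]
    exact h4
  have hfinal : X - x4 ≤ C := le_trans hlow (by rw [heq]; exact le_trans hup1 (le_trans hup2 hup3))
  rw [hXdef] at hfinal
  linarith
end
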